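/- Let u, B, ρ, S, T, h be smooth fields on ℝ × ℝ³ with ρ > 0 everywhere, let μ₀ > 0 be a constant, and set ω = ∇×u. Assume Faraday's equation ∂B/∂t − ∇×(u×B) = 0, Gauss's law ∇·B = 0, the MHD momentum equation ∂u/∂t − u×ω + ∇(h + |u|²/2) − ((∇×B)×B)/(μ₀ρ) = T∇S, and that the magnetic field lies in the constant-entropy surfaces, i.e. B·∇S = 0 everywhere. Then the cross helicity density h_c = u·B satisfies the local conservation law ∂h_c/∂t + ∇·[ u h_c + (h − |u|²/2) B ] = 0. -/

import Mathlib

noncomputable section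

/-- Vectors in ℝ³. -/
abbrev Vec3 : Type := Fin 3 → ℝ

/-- Points of space-time: `(t, x)` with `t : ℝ`, `x : Fin 3 → ℝ`. -/
abbrev Pt : Type := ℝ × Vec3

/-- Euclidean dot product on ℝ³. -/
def dot3 (a b : Vec3) : ℝ := ∑ i, a i * b i

/-- Cross product on ℝ³. -/
def cross3 (a b : Vec3) : Vec3 :=
  ![a 1 * b 2 - a 2 * b 1, a 2 * b 0 - a 0 * b 2, a 0 * b 1 - a 1 * b 0]

/-- Spatial partial derivative ∂f/∂xᵢ of a scalar field. -/
def pd (i : Fin 3) (f : Pt → ℝ) (p : Pt) : ℝ :=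
  fderiv ℝ (fun x => f (p.1, x)) p.2 (Pi.single i 1)

/-- Time derivative ∂f/∂t of a scalar field. -/
def dt (f : Pt → ℝ) (p : Pt) : ℝ := deriv (fun s => f (s, p.2)) p.1

/-- Time derivative of a vector field, componentwise. -/
def dtVec (F : Pt → Vec3) (p : Pt) : Vec3 := fun i => dt (fun q => F q i) p

/-- Spatial gradient ∇f of a scalar field. -/
def grad3 (f : Pt → ℝ) (p : Pt) : Vec3 := fun i => pd i f p

/-- Spatial divergence ∇·F of a vector field. -/
def div3 (F : Pt → Vec3) (p : Pt) : ℝ := ∑ i, pd i (fun q => F q i) p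

/-- Spatial curl ∇×F of a vector field. -/
def curl3 (F : Pt → Vec3) (p : Pt) : Vec3 :=
  ![pd 1 (fun q => F q 2) p - pd 2 (fun q => F q 1) p,
    pd 2 (fun q => F q 0) p - pd 0 (fun q => F q 2) p,
    pd 0 (fun q => F q 1) p - pd 1 (fun q => F q 0) p]

/-- Directional derivative (u·∇)f of a scalar field. -/
def dirD (u : Pt → Vec3) (f : Pt → ℝ) (p : Pt) : ℝ := ∑ i, u p i * pd i f p

/-- Directional derivative (u·∇)F of a vector field. -/
def dirDVec (u F : Pt → Vec3) (p : Pt) : Vec3 :=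
  fun j => ∑ i, u p i * pd i (fun q => F q j) p

/-- (∇u)ᵀ·A, the vector with i-th component ∑ⱼ (∂uʲ/∂xⁱ) Aⱼ. -/
def gradTdot (u A : Pt → Vec3) (p : Pt) : Vec3 :=
  fun i => ∑ j, pd i (fun q => u q j) p * A p j

/-- A field is smooth when it is C^∞ jointly in time and space. -/
def SmoothS (f : Pt → ℝ) : Prop := ContDiff ℝ (⊤ : ℕ∞) f

/-- A vector field is smooth when it is C^∞ jointly in time and space. -/
def SmoothV (F : Pt → Vec3) : Prop := ContDiff ℝ (⊤ : ℕ∞) F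

/-!
Dot the momentum equation with `B` and Faraday's law with `u` and add: the Lorentz force
`(∇×B)×B` is orthogonal to `B`, and so is `T∇S` because `B·∇S = 0`. What is left of
`∂ₜ(u·B)` is, by a componentwise vector-calculus identity, minus the divergence of the flux
`(u·B)u + (h - |u|²/2)B` plus `(h + |u|²/2)∇·B`, which vanishes by Gauss's law.
-/

section VectorCalculus

variable {u B : Pt → Vec3} {f g h : Pt → ℝ}

lemma differentiableAt_space_slice (hf : Differentiable ℝ f) (p : Pt) :
    DifferentiableAt ℝ (fun x : Vec3 => f (p.1, x)) p.2 := by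
  fun_prop

lemma pd_add (hf : Differentiable ℝ f) (hg : Differentiable ℝ g) (i : Fin 3) (p : Pt) :
    pd i (fun q => f q + g q) p = pd i f p + pd i g p := by
  rw [pd, fderiv_fun_add (differentiableAt_space_slice hf p)
    (differentiableAt_space_slice hg p)]
  rfl

lemma pd_sub (hf : Differentiable ℝ f) (hg : Differentiable ℝ g) (i : Fin 3) (p : Pt) :
    pd i (fun q => f q - g q) p = pd i f p - pd i g p := by
  rw [pd, fderiv_fun_sub (differentiableAt_space_slice hf p)
    (differentiableAt_space_slice hg p)]
  rfl

lemma pd_mul (hf : Differentiable ℝ f) (hg : Differentiable ℝ g) (i : Fin 3) (p : Pt) :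
    pd i (fun q => f q * g q) p = f p * pd i g p + pd i f p * g p := by
  rw [pd, fderiv_fun_mul (differentiableAt_space_slice hf p)
    (differentiableAt_space_slice hg p)]
  simp only [add_apply, smul_apply, smul_eq_mul]
  exact congrArg _ (mul_comm _ _)

lemma pd_div_const (hf : Differentiable ℝ f) (c : ℝ) (i : Fin 3) (p : Pt) :
    pd i (fun q => f q / c) p = pd i f p / c := by
  simp only [pd, div_eq_mul_inv]
  rw [fderiv_mul_const (differentiableAt_space_slice hf p)]
  exact mul_comm _ _

lemma dt_dot3 (hu : Differentiable ℝ u) (hB : Differentiable ℝ B) (p : Pt) :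
    dt (fun q => dot3 (u q) (B q)) p = dot3 (dtVec u p) (B p) + dot3 (u p) (dtVec B p) := by
  simp only [dt, dot3, dtVec, ← Finset.sum_add_distrib]
  rw [deriv_fun_sum fun i _ => by fun_prop]
  refine Finset.sum_congr rfl fun i _ => ?_
  rw [deriv_fun_mul (by fun_prop) (by fun_prop)]

lemma dot3_eq_dotProduct (a b : Vec3) : dot3 a b = a ⬝ᵥ b := rfl

lemma dot3_cross3_self_right (a b : Vec3) : dot3 b (cross3 a b) = 0 := by
  rw [cross3, ← cross_apply, dot3_eq_dotProduct]
  exact dot_cross_self a b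

lemma div3_crossHelicityFlux (hu : Differentiable ℝ u) (hB : Differentiable ℝ B)
    (hh : Differentiable ℝ h) (p : Pt) :
    div3 (fun q => dot3 (u q) (B q) • u q + (h q - dot3 (u q) (u q) / 2) • B q) p
      = dot3 (B p) (grad3 (fun q => h q + dot3 (u q) (u q) / 2) p - cross3 (u p) (curl3 u p))
        - dot3 (u p) (curl3 (fun q => cross3 (u q) (B q)) p)
        + (h p + dot3 (u p) (u p) / 2) * div3 B p := by
  simp only [div3, grad3, curl3, cross3, dot3, Fin.sum_univ_three, Pi.add_apply, Pi.sub_apply,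
    Pi.smul_apply, smul_eq_mul, Matrix.cons_val_zero, Matrix.cons_val_one, Matrix.cons_val_two,
    Matrix.head_cons, Matrix.tail_cons]
  simp (disch := fun_prop) only [pd_add, pd_sub, pd_mul, pd_div_const]
  ring

lemma crossHelicity_balance (hu : Differentiable ℝ u) (hB : Differentiable ℝ B)
    (hh : Differentiable ℝ h) (p : Pt) :
    dt (fun q => dot3 (u q) (B q)) p
        + div3 (fun q => dot3 (u q) (B q) • u q + (h q - dot3 (u q) (u q) / 2) • B q) p
      = dot3 (B p) (dtVec u p - cross3 (u p) (curl3 u p)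
            + grad3 (fun q => h q + dot3 (u q) (u q) / 2) p)
        + dot3 (u p) (dtVec B p - curl3 (fun q => cross3 (u q) (B q)) p)
        + (h p + dot3 (u p) (u p) / 2) * div3 B p := by
  rw [dt_dot3 hu hB, div3_crossHelicityFlux hu hB hh]
  simp only [dot3_eq_dotProduct, dotProduct_add, dotProduct_sub, dotProduct_comm (dtVec u p)]
  ring

end VectorCalculus

theorem cross_helicity_conservation_general
    (u B : Pt → Vec3) (ρ S T h : Pt → ℝ) (μ₀ : ℝ)
    (hu : SmoothV u) (hB : SmoothV B) (hh : SmoothS h)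
    (hfar : ∀ p : Pt,
      dtVec B p - curl3 (fun q => cross3 (u q) (B q)) p = 0)
    (hgauss : ∀ p : Pt, div3 B p = 0)
    (hmom : ∀ p : Pt,
      dtVec u p - cross3 (u p) (curl3 u p)
        + grad3 (fun q => h q + dot3 (u q) (u q) / 2) p
        - (μ₀ * ρ p)⁻¹ • cross3 (curl3 B p) (B p)
        = T p • grad3 S p)
    (hBS : ∀ p : Pt, dot3 (B p) (grad3 S p) = 0) :
    ∀ p : Pt,
      dt (fun q => dot3 (u q) (B q)) p
        + div3 (fun q =>
            dot3 (u q) (B q) • u q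
              + (h q - dot3 (u q) (u q) / 2) • B q) p = 0 := by
  intro p
  have hmomB : dot3 (B p) (dtVec u p - cross3 (u p) (curl3 u p)
      + grad3 (fun q => h q + dot3 (u q) (u q) / 2) p) = 0 := by
    rw [eq_add_of_sub_eq (hmom p), dot3_eq_dotProduct, dotProduct_add, dotProduct_smul,
      dotProduct_smul, ← dot3_eq_dotProduct, ← dot3_eq_dotProduct, hBS p,
      dot3_cross3_self_right, smul_zero, smul_zero, add_zero]
  rw [crossHelicity_balance (hu.differentiable (by simp)) (hB.differentiable (by simp))
    (hh.differentiable (by simp)), hmomB, hfar p, hgauss p, dot3_eq_dotProduct, dotProduct_zero]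
  ring

/-- if in addition B·∇S = 0, the cross helicity density obeys
    a local conservation law. -/
theorem cross_helicity_conservation
    (u B : Pt → Vec3) (ρ S T h : Pt → ℝ) (μ₀ : ℝ)
    (hu : SmoothV u) (hB : SmoothV B) (hρ : SmoothS ρ)
    (hS : SmoothS S) (hT : SmoothS T) (hh : SmoothS h)
    (hρpos : ∀ p : Pt, 0 < ρ p) (hμ₀ : 0 < μ₀)
    (hfar : ∀ p : Pt,
      dtVec B p - curl3 (fun q => cross3 (u q) (B q)) p = 0)
    (hgauss : ∀ p : Pt, div3 B p = 0)
    (hmom : ∀ p : Pt,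
      dtVec u p - cross3 (u p) (curl3 u p)
        + grad3 (fun q => h q + dot3 (u q) (u q) / 2) p
        - (μ₀ * ρ p)⁻¹ • cross3 (curl3 B p) (B p)
        = T p • grad3 S p)
    (hBS : ∀ p : Pt, dot3 (B p) (grad3 S p) = 0) :
    ∀ p : Pt,
      dt (fun q => dot3 (u q) (B q)) p
        + div3 (fun q =>
            dot3 (u q) (B q) • u q
              + (h q - dot3 (u q) (u q) / 2) • B q) p = 0 :=
  cross_helicity_conservation_general u B ρ S T h μ₀ hu hB hh hfar hgauss hmom hBS
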